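/- Let x, y ∈ ℂ^{n×r} and let U ∈ U(r) satisfy x* y U = (x* y y* x)^{1/2} (i.e. x* y U is positive semidefinite). Then (y U x*)² = y y* x x* and (x U* y*)² = x x* y y*; that is, y U x* is a square root of (y y*)(x x*) with nonnegative real eigenvalues, and x U* y* is a square root of (x x*)(y y*). -/

import Mathlib

open Matrix Filter
open scoped ComplexOrder

noncomputable def Matrix.PosSemidef.sqrt {n 𝕜 : Type*} [Fintype n] [RCLike 𝕜] [DecidableEq n]
    {A : Matrix n n 𝕜} (hA : A.PosSemidef) : Matrix n n 𝕜 :=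
  hA.1.eigenvectorUnitary.1 * diagonal ((↑) ∘ (Real.sqrt ∘ hA.1.eigenvalues)) *
  (star hA.1.eigenvectorUnitary : Matrix n n 𝕜)

noncomputable def frob {p q : ℕ} (x : Matrix (Fin p) (Fin q) ℂ) : ℝ :=
  Real.sqrt (Matrix.trace (xᴴ * x)).re

noncomputable def rinner {p q : ℕ} (X Y : Matrix (Fin p) (Fin q) ℂ) : ℝ :=
  (Matrix.trace (Xᴴ * Y)).re

noncomputable def nuclear {p q : ℕ} (x : Matrix (Fin p) (Fin q) ℂ) : ℝ :=
  (Matrix.trace (Matrix.PosSemidef.sqrt (Matrix.posSemidef_conjTranspose_mul_self x))).re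

noncomputable def theta {n r : ℕ} (x : Matrix (Fin n) (Fin r) ℂ) : Matrix (Fin n) (Fin n) ℂ :=
  Matrix.PosSemidef.sqrt (Matrix.posSemidef_self_mul_conjTranspose x)

noncomputable def psi {n r : ℕ} (x : Matrix (Fin n) (Fin r) ℂ) : Matrix (Fin n) (Fin n) ℂ :=
  frob x • theta x

noncomputable def Dmet {n r : ℕ} (x y : Matrix (Fin n) (Fin r) ℂ) : ℝ :=
  ⨅ U : Matrix.unitaryGroup (Fin r) ℂ, frob (x - y * (U : Matrix (Fin r) (Fin r) ℂ))

noncomputable def dmet {n r : ℕ} (x y : Matrix (Fin n) (Fin r) ℂ) : ℝ :=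
  ⨅ U : Matrix.unitaryGroup (Fin r) ℂ,
    frob (x - y * (U : Matrix (Fin r) (Fin r) ℂ)) * frob (x + y * (U : Matrix (Fin r) (Fin r) ℂ))


/-!
Since `U` is unitary and `P = x* y U` is Hermitian, `U P = U P* = U U* y* x = y* x`, so
`(y U x*)² = y (U P) x* = y y* x x*`; the second identity is the conjugate transpose of the first.
The nonzero eigenvalues of `(y U) x*` are those of `x* (y U) = P`, which is positive semidefinite.
-/

namespace Matrix

variable {m n α 𝕜 K : Type*} [Fintype m] [Fintype n] [DecidableEq n] [CommRing α] [StarRing α]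
  [RCLike 𝕜] [Field K]

theorem mul_mul_eq_conjTranspose_of_isHermitian {A U : Matrix n n α}
    (hU : U ∈ unitaryGroup n α) (hAU : (A * U).IsHermitian) : U * (A * U) = Aᴴ := by
  conv_lhs => rw [← hAU.eq, conjTranspose_mul, ← mul_assoc, ← star_eq_conjTranspose,
    mem_unitaryGroup_iff.mp hU, one_mul]

theorem sq_mul_mul_conjTranspose_of_isHermitian {x y : Matrix m n α} {U : Matrix n n α}
    (hU : U ∈ unitaryGroup n α) (hxyU : (xᴴ * y * U).IsHermitian) :
    (y * U * xᴴ) * (y * U * xᴴ) = y * yᴴ * (x * xᴴ) := by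
  calc (y * U * xᴴ) * (y * U * xᴴ) = y * (U * (xᴴ * y * U)) * xᴴ := by
        simp only [Matrix.mul_assoc]
    _ = y * yᴴ * (x * xᴴ) := by
      rw [mul_mul_eq_conjTranspose_of_isHermitian hU hxyU, conjTranspose_mul,
        conjTranspose_conjTranspose]
      simp only [Matrix.mul_assoc]

theorem PosSemidef.posSemidef_sqrt {A : Matrix n n 𝕜} (hA : A.PosSemidef) :
    hA.sqrt.PosSemidef :=
  (posSemidef_diagonal_iff.mpr fun _ => RCLike.ofReal_nonneg.mpr (Real.sqrt_nonneg _))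
    |>.mul_mul_conjTranspose_same _

theorem PosSemidef.nonneg_of_mem_spectrum {A : Matrix n n 𝕜} (hA : A.PosSemidef) {μ : 𝕜}
    (hμ : μ ∈ spectrum 𝕜 A) : 0 ≤ μ :=
  (posSemidef_iff_isHermitian_and_spectrum_nonneg.mp hA).2 hμ

theorem mem_spectrum_of_det_sub_smul_one_eq_zero {A : Matrix n n K} {μ : K}
    (h : (A - μ • (1 : Matrix n n K)).det = 0) : μ ∈ spectrum K A := by
  rw [mem_spectrum_iff_isRoot_charpoly, Polynomial.IsRoot, eval_charpoly, ← neg_sub,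
    scalar_apply, ← smul_one_eq_diagonal, det_neg, h, mul_zero]

theorem mem_spectrum_mul_comm_of_ne_zero [DecidableEq m] (A : Matrix m n K) (B : Matrix n m K)
    {μ : K} (hμ : μ ≠ 0) (h : μ ∈ spectrum K (A * B)) : μ ∈ spectrum K (B * A) := by
  rw [mem_spectrum_iff_isRoot_charpoly, Polynomial.IsRoot] at h ⊢
  have := congrArg (Polynomial.eval μ) (charpoly_mul_comm' A B)
  simp only [Polynomial.eval_mul, Polynomial.eval_pow, Polynomial.eval_X, h, mul_zero] at this
  exact (mul_eq_zero.mp this.symm).resolve_left (pow_ne_zero _ hμ)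

end Matrix

/-- if `U ∈ U(r)` satisfies `x* y U = (x* y y* x)^{1/2}` (so `x* y U` is
positive semidefinite), then `(y U x*)² = y y* x x*` and `(x U* y*)² = x x* y y*`;
moreover `y U x*` (a square root of `(y y*)(x x*)`) has only nonnegative real
eigenvalues. -/
theorem polar_square_roots (n r : ℕ) (x y : Matrix (Fin n) (Fin r) ℂ)
    (U : Matrix (Fin r) (Fin r) ℂ) (hU : U ∈ Matrix.unitaryGroup (Fin r) ℂ)
    (hpol : xᴴ * y * U = Matrix.PosSemidef.sqrt (Matrix.posSemidef_self_mul_conjTranspose (xᴴ * y))) :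
    (y * U * xᴴ) * (y * U * xᴴ) = y * yᴴ * (x * xᴴ) ∧
    (x * Uᴴ * yᴴ) * (x * Uᴴ * yᴴ) = x * xᴴ * (y * yᴴ) ∧
    (∀ μ : ℂ, (y * U * xᴴ - μ • (1 : Matrix (Fin n) (Fin n) ℂ)).det = 0 →
      ∃ t : ℝ, 0 ≤ t ∧ μ = (t : ℂ)) := by
  have hP : (xᴴ * y * U).PosSemidef := hpol ▸ PosSemidef.posSemidef_sqrt _
  have hsq := sq_mul_mul_conjTranspose_of_isHermitian hU hP.isHermitian
  refine ⟨hsq, ?_, fun μ hμ => ?_⟩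
  · simpa only [conjTranspose_mul, conjTranspose_conjTranspose, Matrix.mul_assoc]
      using congrArg conjTranspose hsq
  · suffices 0 ≤ μ by
      obtain ⟨t, ht, rfl⟩ := RCLike.nonneg_iff_exists_ofReal.mp this
      exact ⟨t, ht, rfl⟩
    rcases eq_or_ne μ 0 with rfl | hμ0
    · rfl
    refine hP.nonneg_of_mem_spectrum ?_
    rw [Matrix.mul_assoc xᴴ]
    exact mem_spectrum_mul_comm_of_ne_zero (y * U) xᴴ hμ0
      (mem_spectrum_of_det_sub_smul_one_eq_zero hμ)
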